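/- Let d, m, n be integers with d ≥ 1, m ≥ 0, n ≥ d and m + n − d ≥ 1, let λ ∈ ℂ, and let φ ∈ ℂ⟦t,s⟧ be a formal power series with nonzero constant term. Then there exists ψ ∈ ℂ⟦t,s⟧ with constant term λ/d such that the series σ(t,s) = s·(1 + t^m·s^{n−d}·φ(t,s)·ψ(t,s)) satisfies σ(t,s)^d = s^d + λ·t^m·σ(t,s)^n·φ(t, σ(t,s)), where φ(t, σ(t,s)) denotes substitution of the pair (t, σ) (both with zero constant term) into φ. -/

import Mathlib

open MvPowerSeries in
/-- Substitution (composition) of formal power series:  `substPS v f` is the formal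
power series `f (v 0, v 1, …)` obtained by substituting the family `v` of power series
into `f`.  When every `v i` has zero constant coefficient (the only case in which this
notion is used), the coefficient of a monomial `e` in `f (v 0, v 1, …)` is the finite
sum, over the multi-degrees `d` of total degree at most the total degree of `e`
(coordinatewise bounded by it), of `(coeff d f) * coeff e (∏ i, (v i) ^ d i)`;
this is the usual composition of formal power series. -/
noncomputable def substPS {σ τ : Type*} [Fintype σ] [DecidableEq σ] {R : Type*}
    [CommSemiring R] (v : σ → MvPowerSeries τ R) (f : MvPowerSeries σ R) :
    MvPowerSeries τ R :=
  fun e => ∑ d ∈ Finset.Iic (Finsupp.equivFunOnFinite.symm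
      fun _ : σ => e.sum fun _ n => n),
    MvPowerSeries.coeff (R := R) d f * MvPowerSeries.coeff (R := R) e (∏ i, (v i) ^ (d i))

/-!
Write `σ = s w` with `w = 1 + t^m s^(n-d) φ ψ`. Since `w^d - 1 = (w - 1) ∑_{i<d} w^i`, the required
identity follows from the fixed-point equation `ψ = λ w^n φ(t, s w) / (φ ∑_{i<d} w^i)`. As
`t^m s^(n-d) φ` has no constant term, the terms of total degree `≤ k` of the right-hand side depend
only on the terms of degree `< k` of `ψ`; hence the iterates of the right-hand side starting at `0`
stabilise degree by degree, and their limit is a fixed point, with constant term `λ / d`.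
-/

open MvPowerSeries Finset Function

namespace MvPowerSeries

variable {σ R : Type*} [CommRing R]

variable (σ R) in
def orderIdeal (k : ℕ) : Ideal (MvPowerSeries σ R) where
  carrier := {f | (k : ℕ∞) ≤ f.order}
  add_mem' ha hb := (le_min ha hb).trans min_order_le_add
  zero_mem' := by simp
  smul_mem' c _ hf := hf.trans (le_add_self.trans le_order_mul)

theorem mem_orderIdeal {k : ℕ} {f : MvPowerSeries σ R} :
    f ∈ orderIdeal σ R k ↔ (k : ℕ∞) ≤ f.order :=
  Iff.rfl

theorem orderIdeal_antitone : Antitone (orderIdeal σ R) :=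
  fun _ _ hkk' _ hf => mem_orderIdeal.mpr ((Nat.cast_le.mpr hkk').trans (mem_orderIdeal.mp hf))

theorem smodEq_orderIdeal_iff {k : ℕ} {a b : MvPowerSeries σ R} :
    a ≡ b [SMOD orderIdeal σ R k] ↔ ∀ e : σ →₀ ℕ, e.degree < k → coeff e a = coeff e b := by
  rw [SModEq.sub_mem, mem_orderIdeal]
  refine ⟨fun h e he => sub_eq_zero.mp ?_, fun h => nat_le_order fun e he => ?_⟩
  · rw [← map_sub]
    exact coeff_of_lt_order ((Nat.cast_lt.mpr he).trans_le h)
  · rw [map_sub, h e he, sub_self]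

theorem eq_of_forall_smodEq_orderIdeal {a b : MvPowerSeries σ R}
    (h : ∀ k, a ≡ b [SMOD orderIdeal σ R k]) : a = b :=
  ext fun e => smodEq_orderIdeal_iff.mp (h (e.degree + 1)) e (Nat.lt_succ_self _)

theorem mul_left_smodEq_orderIdeal_succ {k : ℕ} {a b c : MvPowerSeries σ R}
    (hc : constantCoeff c = 0) (h : a ≡ b [SMOD orderIdeal σ R k]) :
    c * a ≡ c * b [SMOD orderIdeal σ R (k + 1)] := by
  rw [SModEq.sub_mem, mem_orderIdeal] at h ⊢
  rw [← mul_sub]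
  calc ((k + 1 : ℕ) : ℕ∞) = 1 + k := by push_cast; exact add_comm _ _
    _ ≤ c.order + (a - b).order := add_le_add (one_le_order_iff_constCoeff_eq_zero.mpr hc) h
    _ ≤ (c * (a - b)).order := le_order_mul

theorem exists_isFixedPt_of_smodEq_orderIdeal_succ (T : MvPowerSeries σ R → MvPowerSeries σ R)
    (hT : ∀ k a b, a ≡ b [SMOD orderIdeal σ R k] → T a ≡ T b [SMOD orderIdeal σ R (k + 1)]) :
    ∃ ψ, IsFixedPt T ψ := by
  have step : ∀ j, T^[j] 0 ≡ T^[j + 1] 0 [SMOD orderIdeal σ R j] := by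
    intro j
    induction j with
    | zero => exact smodEq_orderIdeal_iff.mpr fun e he => absurd he (Nat.not_lt_zero _)
    | succ j ih =>
      rw [iterate_succ_apply' T j, iterate_succ_apply' T (j + 1)]
      exact hT _ _ _ ih
  have cauchy : ∀ j j', j ≤ j' → T^[j] 0 ≡ T^[j'] 0 [SMOD orderIdeal σ R j] := by
    intro j j' hjj'
    induction j', hjj' using Nat.le_induction with
    | base => exact SModEq.rfl
    | succ j' hjj' ih => exact ih.trans ((step j').mono (orderIdeal_antitone hjj'))
  let ψ : MvPowerSeries σ R := fun e => coeff e (T^[e.degree + 1] 0)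
  have hψ : ∀ k, ψ ≡ T^[k] 0 [SMOD orderIdeal σ R k] := fun k =>
    smodEq_orderIdeal_iff.mpr fun e he =>
      smodEq_orderIdeal_iff.mp (cauchy _ k he) e (Nat.lt_succ_self _)
  refine ⟨ψ, eq_of_forall_smodEq_orderIdeal fun k => ?_⟩
  have hTψ : T ψ ≡ T^[k + 1] 0 [SMOD orderIdeal σ R (k + 1)] := by
    rw [iterate_succ_apply' T k]
    exact hT _ _ _ (hψ k)
  exact (hTψ.trans (hψ (k + 1)).symm).mono (orderIdeal_antitone k.le_succ)

end MvPowerSeries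

theorem SModEq.inv_of_mul_eq_one {A : Type*} [CommRing A] {I : Ideal A} {a b a' b' : A}
    (ha : a * a' = 1) (hb : b * b' = 1) (h : a ≡ b [SMOD I]) : a' ≡ b' [SMOD I] := by
  have := (SModEq.rfl (x := a')).mul (h.symm.mul (SModEq.rfl (x := b')))
  rwa [hb, mul_one, ← mul_assoc, mul_comm a' a, ha, one_mul] at this

section Substitution

variable {σ τ R : Type*} [CommRing R] [Fintype τ] [DecidableEq τ]

theorem coeff_substPS (v : τ → MvPowerSeries σ R) (f : MvPowerSeries τ R) (e : σ →₀ ℕ) :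
    coeff e (substPS v f) = ∑ dd ∈ Iic (Finsupp.equivFunOnFinite.symm fun _ => e.degree),
      coeff dd f * coeff e (∏ i, v i ^ dd i) :=
  rfl

theorem substPS_smodEq {k : ℕ} {v w : τ → MvPowerSeries σ R} (h : ∀ i, v i ≡ w i [SMOD orderIdeal σ R k])
    (f : MvPowerSeries τ R) : substPS v f ≡ substPS w f [SMOD orderIdeal σ R k] := by
  refine smodEq_orderIdeal_iff.mpr fun e he => ?_
  rw [coeff_substPS, coeff_substPS]
  refine sum_congr rfl fun dd _ => ?_
  have hprod : ∏ i, v i ^ dd i ≡ ∏ i, w i ^ dd i [SMOD orderIdeal σ R k] :=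
    SModEq.prod fun i _ => (h i).pow (dd i)
  rw [smodEq_orderIdeal_iff.mp hprod e he]

theorem constantCoeff_substPS (v : τ → MvPowerSeries σ R) (f : MvPowerSeries τ R) :
    constantCoeff (substPS v f) = constantCoeff f := by
  rw [← coeff_zero_eq_constantCoeff_apply, ← coeff_zero_eq_constantCoeff_apply, coeff_substPS]
  have h0 : (Finsupp.equivFunOnFinite.symm fun _ : τ => (0 : σ →₀ ℕ).degree) = 0 := by
    ext; simp
  rw [h0, ← bot_eq_zero, Iic_bot, sum_singleton, bot_eq_zero]
  simp

end Substitution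

theorem constantCoeff_X_pow_mul_X_pow {σ R : Type*} [CommSemiring R] {i j : σ} {a b : ℕ}
    (hab : a + b ≠ 0) :
    constantCoeff (X i ^ a * X j ^ b : MvPowerSeries σ R) = 0 := by
  obtain rfl | ha := eq_or_ne a 0
  · simp [show b ≠ 0 by simpa using hab]
  · simp [ha]

section Reparametrization

variable {K : Type*} [Field K] {d m n : ℕ} {lam : K} {φ ψ : MvPowerSeries (Fin 2) K}

noncomputable def reparamFactor (d m n : ℕ) (φ ψ : MvPowerSeries (Fin 2) K) :
    MvPowerSeries (Fin 2) K :=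
  1 + X 0 ^ m * X 1 ^ (n - d) * φ * ψ

noncomputable def reparamStep (d m n : ℕ) (lam : K) (φ ψ : MvPowerSeries (Fin 2) K) :
    MvPowerSeries (Fin 2) K :=
  C lam * reparamFactor d m n φ ψ ^ n * substPS ![X 0, X 1 * reparamFactor d m n φ ψ] φ * φ⁻¹ *
    (∑ i ∈ range d, reparamFactor d m n φ ψ ^ i)⁻¹

theorem constantCoeff_reparamFactor (hmnd : 1 ≤ m + n - d) :
    constantCoeff (reparamFactor d m n φ ψ) = 1 := by
  rw [reparamFactor, map_add, map_mul, map_mul, constantCoeff_X_pow_mul_X_pow (by omega)]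
  simp

theorem constantCoeff_geom_sum_reparamFactor (hmnd : 1 ≤ m + n - d) :
    constantCoeff (∑ i ∈ range d, reparamFactor d m n φ ψ ^ i) = d := by
  simp [constantCoeff_reparamFactor hmnd]

theorem reparamStep_smodEq (hd : (d : K) ≠ 0) (hmnd : 1 ≤ m + n - d) {k : ℕ}
    {ψ₁ ψ₂ : MvPowerSeries (Fin 2) K} (h : ψ₁ ≡ ψ₂ [SMOD orderIdeal (Fin 2) K k]) :
    reparamStep d m n lam φ ψ₁ ≡ reparamStep d m n lam φ ψ₂
      [SMOD orderIdeal (Fin 2) K (k + 1)] := by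
  have hc : constantCoeff (X 0 ^ m * X 1 ^ (n - d) * φ) = 0 := by
    rw [map_mul, constantCoeff_X_pow_mul_X_pow (by omega), zero_mul]
  have hw : reparamFactor d m n φ ψ₁ ≡ reparamFactor d m n φ ψ₂
      [SMOD orderIdeal (Fin 2) K (k + 1)] := by
    unfold reparamFactor
    exact SModEq.rfl.add (mul_left_smodEq_orderIdeal_succ hc h)
  have hG_ne : ∀ ψ : MvPowerSeries (Fin 2) K,
      constantCoeff (∑ i ∈ range d, reparamFactor d m n φ ψ ^ i) ≠ 0 := fun _ => by
    rwa [constantCoeff_geom_sum_reparamFactor hmnd]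
  have hGinv := (SModEq.sum fun i _ => hw.pow i).inv_of_mul_eq_one
    (MvPowerSeries.mul_inv_cancel _ (hG_ne ψ₁)) (MvPowerSeries.mul_inv_cancel _ (hG_ne ψ₂))
  have hsubst : substPS ![X 0, X 1 * reparamFactor d m n φ ψ₁] φ ≡
      substPS ![X 0, X 1 * reparamFactor d m n φ ψ₂] φ [SMOD orderIdeal (Fin 2) K (k + 1)] :=
    substPS_smodEq (fun i => by fin_cases i; exacts [SModEq.rfl, SModEq.rfl.mul hw]) φ
  exact (((SModEq.rfl.mul (hw.pow n)).mul hsubst).mul SModEq.rfl).mul hGinv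

theorem constantCoeff_reparamStep (hmnd : 1 ≤ m + n - d) (hφ : constantCoeff φ ≠ 0) :
    constantCoeff (reparamStep d m n lam φ ψ) = lam / d := by
  simp only [reparamStep, map_mul, map_pow, constantCoeff_C, constantCoeff_substPS,
    constantCoeff_inv, constantCoeff_reparamFactor hmnd, constantCoeff_geom_sum_reparamFactor hmnd,
    one_pow, mul_one]
  field_simp

theorem reparam_pow_eq_of_isFixedPt (hd : (d : K) ≠ 0) (hnd : d ≤ n) (hmnd : 1 ≤ m + n - d)
    (hφ : constantCoeff φ ≠ 0) (hψ : IsFixedPt (reparamStep d m n lam φ) ψ) :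
    (X 1 * reparamFactor d m n φ ψ) ^ d = X 1 ^ d + C lam * X 0 ^ m *
      (X 1 * reparamFactor d m n φ ψ) ^ n * substPS ![X 0, X 1 * reparamFactor d m n φ ψ] φ := by
  set w := reparamFactor d m n φ ψ with hw
  set G := ∑ i ∈ range d, w ^ i
  set Φ := substPS ![X 0, X 1 * w] φ
  have hG : G * G⁻¹ = 1 := MvPowerSeries.mul_inv_cancel _ <| by
    rwa [constantCoeff_geom_sum_reparamFactor hmnd]
  have hφ' : φ * φ⁻¹ = 1 := MvPowerSeries.mul_inv_cancel _ hφ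
  have key : reparamStep d m n lam φ ψ * φ * G = C lam * w ^ n * Φ := by
    unfold reparamStep
    linear_combination (C lam * w ^ n * Φ * (G * G⁻¹)) * hφ' + (C lam * w ^ n * Φ) * hG
  rw [hψ.eq] at key
  have hw₁ : w - 1 = X 0 ^ m * X 1 ^ (n - d) * φ * ψ := by
    rw [hw, reparamFactor, add_sub_cancel_left]
  have hwd : w ^ d = 1 + X 0 ^ m * X 1 ^ (n - d) * φ * ψ * G := by
    linear_combination -(geom_sum_mul w d) + G * hw₁
  have hX : X 1 ^ (n - d) * X 1 ^ d = (X 1 ^ n : MvPowerSeries (Fin 2) K) := by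
    rw [← pow_add, Nat.sub_add_cancel hnd]
  rw [mul_pow, mul_pow, hwd]
  linear_combination
    (X 0 ^ m * X 1 ^ (n - d) * X 1 ^ d) * key + (X 0 ^ m * C lam * w ^ n * Φ) * hX

end Reparametrization

open MvPowerSeries in
/-- Let `d, m, n` be integers with `d ≥ 1`, `m ≥ 0`, `n ≥ d` and `m + n − d ≥ 1`, let
`λ ∈ ℂ`, and let `φ ∈ ℂ⟦t,s⟧` be a formal power series (the variables being `t = X 0`
and `s = X 1`) with nonzero constant term.  Then there exists `ψ ∈ ℂ⟦t,s⟧` with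
constant term `λ/d` such that the series `σ(t,s) = s·(1 + t^m·s^{n−d}·φ(t,s)·ψ(t,s))`
satisfies `σ(t,s)^d = s^d + λ·t^m·σ(t,s)^n·φ(t, σ(t,s))`, where `φ(t, σ(t,s))` denotes
substitution of the pair `(t, σ)` (both with zero constant term) into `φ`. -/
theorem exists_puiseux_reparametrization (d m n : ℕ) (hd : 1 ≤ d) (hnd : d ≤ n)
    (hmnd : 1 ≤ m + n - d) (lam : ℂ) (φ : MvPowerSeries (Fin 2) ℂ)
    (hφ : constantCoeff (σ := Fin 2) (R := ℂ) φ ≠ 0) :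
    ∃ ψ σ : MvPowerSeries (Fin 2) ℂ,
      constantCoeff (σ := Fin 2) (R := ℂ) ψ = lam / (d : ℂ) ∧
      σ = X 1 * (1 + X 0 ^ m * X 1 ^ (n - d) * φ * ψ) ∧
      σ ^ d = X 1 ^ d + C (σ := Fin 2) (R := ℂ) lam * X 0 ^ m * σ ^ n * substPS ![X 0, σ] φ := by
  have hd' : (d : ℂ) ≠ 0 := Nat.cast_ne_zero.mpr (by omega)
  obtain ⟨ψ, hψ⟩ := exists_isFixedPt_of_smodEq_orderIdeal_succ (reparamStep d m n lam φ)
    fun _ _ _ h => reparamStep_smodEq hd' hmnd h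
  refine ⟨ψ, X 1 * reparamFactor d m n φ ψ, ?_, rfl,
    reparam_pow_eq_of_isFixedPt hd' hnd hmnd hφ hψ⟩
  rw [← hψ.eq]
  exact constantCoeff_reparamStep hmnd hφ
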